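/- arXiv:1008.2400 — 2 statements merged into one kernel-verified Lean document; each statement's English description precedes it below -/
import Mathlib

section
/- Let (X, τ, ν) be a conservative ergodic measure-preserving system on a probability space, and let φ : X → ℤ be integrable with ∫ φ dν = 0. Then the skew product transformation τ̃ on X × ℤ defined by τ̃(x, k) = (τ x, k + φ(x)), preserving ν × (counting measure), is conservative: for every measurable set B ⊆ X × ℤ of positive measure, almost every point of B returns to B under some positive iterate of τ̃. -/
open MeasureTheory Filter Function Topology

section Aux

variable {X : Type*} [MeasurableSpace X]

lemma skew_iterate (τ : X → X) (φ : X → ℤ) (n : ℕ) (p : X × ℤ) :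
    (fun q : X × ℤ => (τ q.1, q.2 + φ q.1))^[n] p
      = (τ^[n] p.1, p.2 + birkhoffSum τ φ n p.1) := by
  induction n generalizing p with
  | zero => simp [birkhoffSum]
  | succ n ih =>
      rw [Function.iterate_succ_apply, ih]
      simp [birkhoffSum_succ', Function.iterate_succ_apply, add_assoc]

lemma birkhoffSum_int_cast (τ : X → X) (φ : X → ℤ) (n : ℕ) (x : X) :
    birkhoffSum τ (fun y => (φ y : ℝ)) n x = ((birkhoffSum τ φ n x : ℤ) : ℝ) := by
  simp [birkhoffSum]

variable {ν : Measure X}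

lemma birkhoffSum_ae_congr {τ : X → X} (hτ : MeasurePreserving τ ν ν) {f g : X → ℝ}
    (h : f =ᵐ[ν] g) (N : ℕ) :
    (fun x => birkhoffSum τ f N x) =ᵐ[ν] fun x => birkhoffSum τ g N x := by
  have h2 : ∀ᵐ x ∂ν, ∀ n : ℕ, f (τ^[n] x) = g (τ^[n] x) := by
    rw [ae_all_iff]
    exact fun n => (hτ.iterate n).quasiMeasurePreserving.ae_eq h
  filter_upwards [h2] with x hx
  exact Finset.sum_congr rfl fun i _ => hx i

lemma integrable_comp_iterate {τ : X → X} (hτ : MeasurePreserving τ ν ν) {f : X → ℝ}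
    (hf : Integrable f ν) (n : ℕ) : Integrable (fun x => f (τ^[n] x)) ν :=
  ((hτ.iterate n).integrable_comp hf.aestronglyMeasurable).mpr hf

lemma integrable_birkhoffSum {τ : X → X} (hτ : MeasurePreserving τ ν ν) {f : X → ℝ}
    (hf : Integrable f ν) (N : ℕ) : Integrable (fun x => birkhoffSum τ f N x) ν := by
  simp only [birkhoffSum]
  exact integrable_finset_sum _ fun i _ => integrable_comp_iterate hτ hf i

lemma integral_comp_iterate {τ : X → X} (hτ : MeasurePreserving τ ν ν) {f : X → ℝ}
    (hf : Integrable f ν) (n : ℕ) :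
    ∫ x, f (τ^[n] x) ∂ν = ∫ x, f x ∂ν := by
  have := integral_map (hτ.iterate n).aemeasurable
    (f := f) (by rw [(hτ.iterate n).map_eq]; exact hf.aestronglyMeasurable)
  rw [(hτ.iterate n).map_eq] at this
  exact this.symm

lemma integral_abs_birkhoffSum_le {τ : X → X} (hτ : MeasurePreserving τ ν ν) {f : X → ℝ}
    (hf : Integrable f ν) (N : ℕ) :
    ∫ x, |birkhoffSum τ f N x| ∂ν ≤ N * ∫ x, |f x| ∂ν := by
  have h1 : ∫ x, |birkhoffSum τ f N x| ∂ν
      ≤ ∫ x, ∑ i ∈ Finset.range N, |f (τ^[i] x)| ∂ν := by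
    refine integral_mono (integrable_birkhoffSum hτ hf N).abs
      (integrable_finset_sum _ fun i _ => (integrable_comp_iterate hτ hf i).abs) ?_
    exact fun x => Finset.abs_sum_le_sum_abs _ _
  rw [integral_finset_sum _ (fun i _ => (integrable_comp_iterate hτ hf i).abs)] at h1
  calc ∫ x, |birkhoffSum τ f N x| ∂ν
      ≤ ∑ i ∈ Finset.range N, ∫ x, |f (τ^[i] x)| ∂ν := h1
    _ = ∑ _i ∈ Finset.range N, ∫ x, |f x| ∂ν :=
        Finset.sum_congr rfl fun i _ => integral_comp_iterate hτ hf.abs i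
    _ = N * ∫ x, |f x| ∂ν := by simp [Finset.sum_const, nsmul_eq_mul]

end Aux
section Koopman

variable {X : Type*} [MeasurableSpace X] {ν : Measure X}

/-- The Koopman operator on `L²`. -/
noncomputable def koopman (ν : Measure X) {τ : X → X} (hτ : MeasurePreserving τ ν ν) :
    Lp ℝ 2 ν →L[ℝ] Lp ℝ 2 ν :=
  LinearMap.mkContinuous (Lp.compMeasurePreservingₗ ℝ τ hτ) 1
    (fun g => by rw [one_mul]; exact le_of_eq (Lp.norm_compMeasurePreserving g hτ))

lemma koopman_norm_le {τ : X → X} (hτ : MeasurePreserving τ ν ν) :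
    ‖koopman ν hτ‖ ≤ 1 :=
  LinearMap.mkContinuous_norm_le _ zero_le_one _

lemma koopman_coeFn {τ : X → X} (hτ : MeasurePreserving τ ν ν) (g : Lp ℝ 2 ν) :
    (koopman ν hτ g : X → ℝ) =ᵐ[ν] (g : X → ℝ) ∘ τ :=
  Lp.coeFn_compMeasurePreserving g hτ

lemma koopman_iterate_coeFn {τ : X → X} (hτ : MeasurePreserving τ ν ν) (g : Lp ℝ 2 ν) (n : ℕ) :
    ((koopman ν hτ)^[n] g : X → ℝ) =ᵐ[ν] (g : X → ℝ) ∘ τ^[n] := by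
  induction n with
  | zero => simp
  | succ n ih =>
      rw [Function.iterate_succ_apply']
      refine (koopman_coeFn hτ _).trans ?_
      refine (hτ.quasiMeasurePreserving.ae_eq ih).trans ?_
      rw [Function.comp_assoc, ← Function.iterate_succ]

lemma Lp_coeFn_sum {ι : Type*} (s : Finset ι) (F : ι → Lp ℝ 2 ν) :
    ((∑ i ∈ s, F i : Lp ℝ 2 ν) : X → ℝ) =ᵐ[ν] fun x => ∑ i ∈ s, (F i : X → ℝ) x := by
  classical
  induction s using Finset.induction_on with
  | empty => simp only [Finset.sum_empty]; exact Lp.coeFn_zero ℝ 2 ν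
  | insert _ _ hni ih =>
      rw [Finset.sum_insert hni]
      refine (Lp.coeFn_add _ _).trans ?_
      filter_upwards [ih] with x hx
      rw [Pi.add_apply, hx, Finset.sum_insert hni]

lemma koopman_birkhoffAverage_coeFn {τ : X → X} (hτ : MeasurePreserving τ ν ν)
    (g : Lp ℝ 2 ν) (N : ℕ) :
    ((birkhoffAverage ℝ (koopman ν hτ) _root_.id N g : Lp ℝ 2 ν) : X → ℝ)
      =ᵐ[ν] fun x => birkhoffAverage ℝ τ (g : X → ℝ) N x := by
  have hsum : ((birkhoffSum (koopman ν hτ) _root_.id N g : Lp ℝ 2 ν) : X → ℝ)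
      =ᵐ[ν] fun x => birkhoffSum τ (g : X → ℝ) N x := by
    have h1 : ∀ᵐ x ∂ν, ∀ n : ℕ, ((koopman ν hτ)^[n] g : X → ℝ) x = (g : X → ℝ) (τ^[n] x) := by
      rw [ae_all_iff]; exact fun n => koopman_iterate_coeFn hτ g n
    refine (Lp_coeFn_sum (Finset.range N) _).trans ?_
    filter_upwards [h1] with x hx
    exact Finset.sum_congr rfl fun i _ => hx i
  refine (Lp.coeFn_smul _ _).trans ?_
  filter_upwards [hsum] with x hx
  simp [birkhoffAverage, hx]

end Koopman
section L2

open scoped ENNReal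

variable {X : Type*} [MeasurableSpace X] {ν : Measure X} [IsProbabilityMeasure ν]

lemma integral_abs_le_norm (h : Lp ℝ 2 ν) : ∫ x, |(h : X → ℝ) x| ∂ν ≤ ‖h‖ := by
  have h0 : ∫ x, |(h : X → ℝ) x| ∂ν = ∫ x, ‖(h : X → ℝ) x‖ ∂ν := by
    simp [Real.norm_eq_abs]
  have h1 : ∫ x, |(h : X → ℝ) x| ∂ν = (eLpNorm (h : X → ℝ) 1 ν).toReal := by
    rw [h0, integral_norm_eq_lintegral_enorm (Lp.aestronglyMeasurable h),
      eLpNorm_one_eq_lintegral_enorm]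
  rw [h1, Lp.norm_def]
  exact ENNReal.toReal_mono (Lp.eLpNorm_ne_top h)
    (eLpNorm_le_eLpNorm_of_exponent_le one_le_two (Lp.aestronglyMeasurable h))

lemma l2_mean_ergodic {τ : X → X} (hτ : MeasurePreserving τ ν ν) (herg : Ergodic τ ν)
    (g : Lp ℝ 2 ν) (hg0 : ∫ x, (g : X → ℝ) x ∂ν = 0) :
    Tendsto (fun N => ‖(birkhoffAverage ℝ (koopman ν hτ) _root_.id N g : Lp ℝ 2 ν)‖)
      atTop (𝓝 0) := by
  have htend := (koopman ν hτ).tendsto_birkhoffAverage_orthogonalProjection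
    (𝕜 := ℝ) (koopman_norm_le hτ) g
  set K := (koopman ν hτ).eqLocus (1 : Lp ℝ 2 ν →L[ℝ] Lp ℝ 2 ν) with hK
  set P : Lp ℝ 2 ν := (K.orthogonalProjectionOnto g).val with hPdef
  -- `P` is a fixed point of the Koopman operator, hence a.e. constant
  have hPfix : koopman ν hτ P = P := by
    have h2 : koopman ν hτ ((K.orthogonalProjectionOnto g).val)
        = (1 : Lp ℝ 2 ν →L[ℝ] Lp ℝ 2 ν) ((K.orthogonalProjectionOnto g).val) :=
      LinearMap.mem_eqLocus.mp (K.orthogonalProjectionOnto g).2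
    simpa [← hPdef] using h2
  have hPae : (P : X → ℝ) ∘ τ =ᵐ[ν] (P : X → ℝ) := by
    have h1 := koopman_coeFn hτ P
    rw [hPfix] at h1
    exact h1.symm
  obtain ⟨c, hc⟩ := herg.ae_eq_const_of_ae_eq_comp_ae (Lp.aestronglyMeasurable P) hPae
  -- each Birkhoff average has zero integral
  have havg0 : ∀ N : ℕ, ∫ x, ((birkhoffAverage ℝ (koopman ν hτ) _root_.id N g :
      Lp ℝ 2 ν) : X → ℝ) x ∂ν = 0 := by
    intro N
    have h2 := koopman_birkhoffAverage_coeFn hτ g N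
    rw [integral_congr_ae h2]
    have hgi : Integrable (g : X → ℝ) ν := (Lp.memLp g).integrable one_le_two
    have : ∫ x, birkhoffAverage ℝ τ (g : X → ℝ) N x ∂ν
        = (N : ℝ)⁻¹ • ∫ x, birkhoffSum τ (g : X → ℝ) N x ∂ν := by
      simp only [birkhoffAverage]
      rw [integral_smul]
    rw [this]
    simp only [birkhoffSum]
    rw [integral_finset_sum _ (fun i _ => integrable_comp_iterate hτ hgi i)]
    have : ∀ i ∈ Finset.range N, ∫ x, (g : X → ℝ) (τ^[i] x) ∂ν = 0 := fun i _ => by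
      rw [integral_comp_iterate hτ hgi i, hg0]
    rw [Finset.sum_congr rfl this]
    simp
  -- the integral of `P` is the limit of the integrals of the averages, hence `0`
  have hPint0 : ∫ x, (P : X → ℝ) x ∂ν = 0 := by
    have hcont : Tendsto (fun N => ∫ x, ((birkhoffAverage ℝ (koopman ν hτ) _root_.id N g :
        Lp ℝ 2 ν) : X → ℝ) x ∂ν) atTop (𝓝 (∫ x, (P : X → ℝ) x ∂ν)) := by
      rw [← tendsto_sub_nhds_zero_iff]
      have hbound : ∀ N, |(∫ x, ((birkhoffAverage ℝ (koopman ν hτ) _root_.id N g :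
          Lp ℝ 2 ν) : X → ℝ) x ∂ν) - ∫ x, (P : X → ℝ) x ∂ν|
          ≤ ‖(birkhoffAverage ℝ (koopman ν hτ) _root_.id N g : Lp ℝ 2 ν) - P‖ := by
        intro N
        set A := (birkhoffAverage ℝ (koopman ν hτ) _root_.id N g : Lp ℝ 2 ν)
        have hAi : Integrable (A : X → ℝ) ν := (Lp.memLp A).integrable one_le_two
        have hPi : Integrable (P : X → ℝ) ν := (Lp.memLp P).integrable one_le_two
        rw [← integral_sub hAi hPi]
        have h3 : ∫ x, ((A : X → ℝ) x - (P : X → ℝ) x) ∂ν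
            = ∫ x, ((A - P : Lp ℝ 2 ν) : X → ℝ) x ∂ν :=
          (integral_congr_ae (Lp.coeFn_sub A P)).symm
        rw [h3]
        calc |∫ x, ((A - P : Lp ℝ 2 ν) : X → ℝ) x ∂ν|
            ≤ ∫ x, |((A - P : Lp ℝ 2 ν) : X → ℝ) x| ∂ν := by
              simpa [Real.norm_eq_abs] using
                norm_integral_le_integral_norm (μ := ν) ((A - P : Lp ℝ 2 ν) : X → ℝ)
          _ ≤ ‖A - P‖ := integral_abs_le_norm _
      have hnorm : Tendsto (fun N => ‖(birkhoffAverage ℝ (koopman ν hτ) _root_.id N g :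
          Lp ℝ 2 ν) - P‖) atTop (𝓝 0) := by
        have := htend.sub (tendsto_const_nhds (x := P))
        simpa using this.norm
      refine squeeze_zero_norm (fun N => ?_) hnorm
      simpa [Real.norm_eq_abs] using hbound N
    have h4 : Tendsto (fun _ : ℕ => (0 : ℝ)) atTop (𝓝 (∫ x, (P : X → ℝ) x ∂ν)) :=
      hcont.congr fun N => havg0 N
    exact tendsto_nhds_unique h4 tendsto_const_nhds
  -- hence the constant is zero and `P = 0`
  have hc0 : c = 0 := by
    have := integral_congr_ae hc
    rw [hPint0] at this
    simpa using this.symm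
  have hP0 : P = 0 := by
    apply Lp.ext (p := (2 : ℝ≥0∞))
    refine hc.trans ?_
    rw [hc0]
    exact (Lp.coeFn_zero ℝ 2 ν).symm
  rw [hP0] at htend
  simpa using htend.norm
end L2
section L1

variable {X : Type*} [MeasurableSpace X] {ν : Measure X} [IsProbabilityMeasure ν]

lemma integrable_birkhoffAverage {τ : X → X} (hτ : MeasurePreserving τ ν ν) {f : X → ℝ}
    (hf : Integrable f ν) (N : ℕ) :
    Integrable (fun x => birkhoffAverage ℝ τ f N x) ν := by
  simp only [birkhoffAverage]
  exact (integrable_birkhoffSum hτ hf N).smul ((N : ℝ)⁻¹)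

lemma integral_abs_birkhoffAverage_le {τ : X → X} (hτ : MeasurePreserving τ ν ν) {f : X → ℝ}
    (hf : Integrable f ν) (N : ℕ) :
    ∫ x, |birkhoffAverage ℝ τ f N x| ∂ν ≤ ∫ x, |f x| ∂ν := by
  rcases Nat.eq_zero_or_pos N with h | h
  · subst h
    simp only [birkhoffAverage, Nat.cast_zero, birkhoffSum]
    simp [integral_nonneg, abs_nonneg, (integral_nonneg (fun x => abs_nonneg (f x)) : 0 ≤ ∫ x, |f x| ∂ν)]
  have h1 : ∀ x, |birkhoffAverage ℝ τ f N x| = (N : ℝ)⁻¹ * |birkhoffSum τ f N x| := by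
    intro x
    simp [birkhoffAverage, abs_mul, smul_eq_mul, abs_of_nonneg (by positivity : (0:ℝ) ≤ (N:ℝ)⁻¹)]
  calc ∫ x, |birkhoffAverage ℝ τ f N x| ∂ν
      = (N : ℝ)⁻¹ * ∫ x, |birkhoffSum τ f N x| ∂ν := by
        simp only [h1]; rw [integral_const_mul]
    _ ≤ (N : ℝ)⁻¹ * (N * ∫ x, |f x| ∂ν) := by
        have := integral_abs_birkhoffSum_le hτ hf N
        have hN : (0:ℝ) ≤ (N : ℝ)⁻¹ := inv_nonneg.mpr (Nat.cast_nonneg N)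
        exact mul_le_mul_of_nonneg_left this hN
    _ = ∫ x, |f x| ∂ν := by
        rw [← mul_assoc, inv_mul_cancel₀ (by exact_mod_cast h.ne' : (N:ℝ) ≠ 0), one_mul]

lemma l1_mean_ergodic {τ : X → X} (hτ : MeasurePreserving τ ν ν) (herg : Ergodic τ ν)
    {ψ : X → ℝ} (hmψ : Measurable ψ) (hint : Integrable ψ ν) (hz : ∫ x, ψ x ∂ν = 0) :
    Tendsto (fun N => ∫ x, |birkhoffAverage ℝ τ ψ N x| ∂ν) atTop (𝓝 0) := by
  rw [Metric.tendsto_atTop]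
  intro ε hε
  -- truncations of ψ
  set trunc : ℕ → X → ℝ := fun M x => if |ψ x| ≤ (M : ℝ) then ψ x else 0 with htr
  have htm : ∀ M, Measurable (trunc M) := fun M =>
    Measurable.ite (measurableSet_le hmψ.abs measurable_const) hmψ measurable_const
  have hconv : Tendsto (fun M : ℕ => ∫ x, |ψ x - trunc M x| ∂ν) atTop (𝓝 0) := by
    have h := tendsto_integral_of_dominated_convergence (μ := ν)
      (F := fun M x => |ψ x - trunc M x|) (f := fun _ => (0:ℝ)) (bound := fun x => |ψ x|)
      (fun M => ((hmψ.sub (htm M)).abs).aestronglyMeasurable) hint.abs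
      (fun M => ae_of_all _ fun x => by
        simp only [htr, Real.norm_eq_abs, abs_abs]
        split <;> simp [abs_nonneg])
      (ae_of_all _ fun x => by
        have hev : ∀ᶠ M : ℕ in atTop, |ψ x - trunc M x| = 0 :=
          eventually_atTop.2 ⟨⌈|ψ x|⌉₊, fun M hM => by
            have : |ψ x| ≤ (M : ℝ) := (Nat.le_ceil _).trans (Nat.cast_le.2 hM)
            simp [htr, this]⟩
        exact Tendsto.congr' (hev.mono fun M h => h.symm) tendsto_const_nhds)
    simpa using h
  obtain ⟨M, hM⟩ : ∃ M : ℕ, ∫ x, |ψ x - trunc M x| ∂ν < ε / 4 :=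
    (hconv.eventually (gt_mem_nhds (by positivity : (0:ℝ) < ε / 4))).exists
  set χ : X → ℝ := trunc M with hχ
  have hχ2 : MemLp χ 2 ν := by
    refine MemLp.of_bound ((htm M).aestronglyMeasurable) (M : ℝ) (ae_of_all _ fun x => ?_)
    simp only [hχ, htr, Real.norm_eq_abs]
    split
    · assumption
    · simp
  have hχint : Integrable χ ν := hχ2.integrable one_le_two
  set c : ℝ := ∫ x, χ x ∂ν with hcdef
  have hcabs : |c| ≤ ∫ x, |ψ x - χ x| ∂ν := by
    have h1 : c = ∫ x, (χ x - ψ x) ∂ν := by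
      rw [integral_sub hχint hint, hz, sub_zero]
    rw [h1]
    calc |∫ x, (χ x - ψ x) ∂ν| ≤ ∫ x, |χ x - ψ x| ∂ν := by
          simpa [Real.norm_eq_abs] using
            norm_integral_le_integral_norm (μ := ν) (fun x => χ x - ψ x)
      _ = ∫ x, |ψ x - χ x| ∂ν := by simp [abs_sub_comm]
  set g' : X → ℝ := fun x => χ x - c with hg'
  have hg'2 : MemLp g' 2 ν := hχ2.sub (memLp_const c)
  have hg'int : Integrable g' ν := hg'2.integrable one_le_two
  have hg'0 : ∫ x, g' x ∂ν = 0 := by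
    simp only [hg']
    rw [integral_sub hχint (integrable_const c)]
    simp [← hcdef]
  set g : Lp ℝ 2 ν := hg'2.toLp g' with hgdef
  have hgae : (g : X → ℝ) =ᵐ[ν] g' := hg'2.coeFn_toLp
  have hg0 : ∫ x, (g : X → ℝ) x ∂ν = 0 := by rw [integral_congr_ae hgae]; exact hg'0
  obtain ⟨N₀, hN₀⟩ := eventually_atTop.1
    ((l2_mean_ergodic hτ herg g hg0).eventually
      (gt_mem_nhds (by positivity : (0:ℝ) < ε / 4)))
  refine ⟨max N₀ 1, fun N hN => ?_⟩
  have hNN₀ : N₀ ≤ N := le_trans (le_max_left _ _) hN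
  -- pointwise decomposition ψ = g' + (ψ - g')
  have hψeq : ∀ x, birkhoffAverage ℝ τ ψ N x
      = birkhoffAverage ℝ τ g' N x + birkhoffAverage ℝ τ (fun y => ψ y - g' y) N x := by
    intro x
    simp only [birkhoffAverage, ← smul_add]
    congr 1
    simp [birkhoffSum, ← Finset.sum_add_distrib]
  have hint2 : Integrable (fun y => ψ y - g' y) ν := hint.sub hg'int
  -- first bound
  have hbound1 : ∫ x, |birkhoffAverage ℝ τ g' N x| ∂ν < ε / 4 := by
    have he1 : (fun x => |birkhoffAverage ℝ τ g' N x|)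
        =ᵐ[ν] fun x => |((birkhoffAverage ℝ (koopman ν hτ) _root_.id N g : Lp ℝ 2 ν) : X → ℝ) x| := by
      have h2 := birkhoffSum_ae_congr hτ (hgae.symm : g' =ᵐ[ν] (g : X → ℝ)) N
      filter_upwards [h2, koopman_birkhoffAverage_coeFn hτ g N] with x hx hkx
      rw [hkx]
      simp only [birkhoffAverage, hx]
    rw [integral_congr_ae he1]
    exact lt_of_le_of_lt (integral_abs_le_norm _) (hN₀ N hNN₀)
  -- second bound
  have hbound2 : ∫ x, |birkhoffAverage ℝ τ (fun y => ψ y - g' y) N x| ∂ν < ε / 2 := by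
    refine lt_of_le_of_lt (integral_abs_birkhoffAverage_le hτ hint2 N) ?_
    have h3 : ∀ x, |ψ x - g' x| ≤ |ψ x - χ x| + |c| := fun x => by
      have : ψ x - g' x = (ψ x - χ x) + c := by simp [hg']; ring
      rw [this]; exact abs_add_le _ _
    calc ∫ x, |ψ x - g' x| ∂ν ≤ ∫ x, (|ψ x - χ x| + |c|) ∂ν :=
          by
            have hi : Integrable (fun x => |ψ x - χ x|) ν := by
              simpa using (hint.sub hχint).abs
            have hj : Integrable (fun x => |ψ x - g' x|) ν := by
              simpa using (hint.sub hg'int).abs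
            exact integral_mono hj (hi.add (integrable_const _)) h3
      _ = (∫ x, |ψ x - χ x| ∂ν) + |c| := by
          have hi : Integrable (fun x => |ψ x - χ x|) ν := by
            simpa using (hint.sub hχint).abs
          rw [integral_add hi (integrable_const _), integral_const]
          simp
      _ < ε / 4 + ε / 4 := by
          exact add_lt_add_of_lt_of_le hM (hcabs.trans_lt hM).le
      _ = ε / 2 := by ring
  -- combine
  have hcomb : ∫ x, |birkhoffAverage ℝ τ ψ N x| ∂ν
      ≤ (∫ x, |birkhoffAverage ℝ τ g' N x| ∂ν)
        + ∫ x, |birkhoffAverage ℝ τ (fun y => ψ y - g' y) N x| ∂ν := by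
    rw [← integral_add (integrable_birkhoffAverage hτ hg'int N).abs
      (integrable_birkhoffAverage hτ hint2 N).abs]
    refine integral_mono (integrable_birkhoffAverage hτ hint N).abs
      ((integrable_birkhoffAverage hτ hg'int N).abs.add
        (integrable_birkhoffAverage hτ hint2 N).abs) fun x => ?_
    rw [hψeq x]
    exact abs_add_le _ _
  have hnonneg : 0 ≤ ∫ x, |birkhoffAverage ℝ τ ψ N x| ∂ν :=
    integral_nonneg fun x => abs_nonneg _
  rw [Real.dist_eq, sub_zero, abs_of_nonneg hnonneg]
  calc ∫ x, |birkhoffAverage ℝ τ ψ N x| ∂ν ≤ _ := hcomb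
    _ < ε / 4 + ε / 2 := add_lt_add hbound1 hbound2
    _ < ε := by linarith

end L1
section Count

open scoped ENNReal

instance : SigmaFinite (Measure.count : Measure ℤ) := by
  refine ⟨⟨⟨fun n => (↑(Finset.Icc (-(n:ℤ)) (n:ℤ)) : Set ℤ), fun _ => trivial, fun n => ?_,
    Set.eq_univ_of_forall fun m => Set.mem_iUnion.2 ⟨m.natAbs, by
      simp only [Finset.coe_Icc, Set.mem_Icc]; omega⟩⟩⟩⟩
  rw [Measure.count_apply_finset]
  exact ENNReal.natCast_lt_top _

end Count
section Main

open scoped ENNReal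

variable {X : Type*} [MeasurableSpace X]

lemma null_of_no_zero_return (ν : Measure X) [IsProbabilityMeasure ν]
    (τ : X → X) (hτ : MeasurePreserving τ ν ν) (herg : Ergodic τ ν)
    (φ : X → ℤ) (hmeas : Measurable φ)
    (hint : Integrable (fun x => (φ x : ℝ)) ν)
    (hzero : ∫ x, (φ x : ℝ) ∂ν = 0)
    (E : Set X) (hEm : MeasurableSet E)
    (hkey : ∀ x ∈ E, ∀ n, 0 < n → ¬(τ^[n] x ∈ E ∧ birkhoffSum τ φ n x = 0)) :
    ν E = 0 := by
  classical
  set ψ : X → ℝ := fun x => (φ x : ℝ) with hψ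
  have hmψ : Measurable ψ := Measurable.comp (Measurable.of_discrete) hmeas
  -- measurability of Birkhoff sums
  have hSm : ∀ n : ℕ, Measurable (fun x => birkhoffSum τ φ n x) := fun n => by
    simpa [birkhoffSum] using
      Finset.measurable_sum (Finset.range n) fun i _ => hmeas.comp (hτ.measurable.iterate i)
  -- the disjoint family
  set A : ℕ → ℤ → Set X := fun n j => {x | τ^[n] x ∈ E ∧ birkhoffSum τ φ n x = j} with hA
  have hAm : ∀ n j, MeasurableSet (A n j) := fun n j =>
    ((hτ.measurable.iterate n) hEm).inter ((hSm n) (measurableSet_singleton j))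
  have hdisj : ∀ j : ℤ, ∀ m n : ℕ, m < n → Disjoint (A m j) (A n j) := by
    intro j m n hmn
    rw [Set.disjoint_left]
    intro x hxm hxn
    have hy : τ^[m] x ∈ E := hxm.1
    have hr : 0 < n - m := by omega
    have hmr : m + (n - m) = n := by omega
    have hsum := birkhoffSum_add τ φ m (n - m) x
    rw [hmr] at hsum
    have hS0 : birkhoffSum τ φ (n - m) (τ^[m] x) = 0 := by
      have := hxm.2
      have h2 := hxn.2
      omega
    have hmem : τ^[n - m] (τ^[m] x) ∈ E := by
      rw [← Function.iterate_add_apply]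
      have hnm : n - m + m = n := by omega
      rw [hnm]
      exact hxn.1
    exact hkey _ hy (n - m) hr ⟨hmem, hS0⟩
  -- the bad sets for Markov's inequality
  set Bad : ℕ → ℕ → Set X := fun K n => {x | (K : ℤ) < |birkhoffSum τ φ n x|} with hBad
  -- main counting estimate
  have hmainE : ∀ N K : ℕ, (N : ℝ≥0∞) * ν E ≤ ((2 * K + 1 : ℕ) : ℝ≥0∞)
      + ∑ n ∈ Finset.range N, ν (Bad K n) := by
    intro N K
    have hsub : ∀ n, τ^[n] ⁻¹' E ⊆ (⋃ j ∈ Finset.Icc (-(K:ℤ)) (K:ℤ), A n j) ∪ Bad K n := by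
      intro n x hx
      by_cases hK : |birkhoffSum τ φ n x| ≤ (K : ℤ)
      · exact Or.inl (Set.mem_biUnion (Finset.mem_Icc.mpr (abs_le.mp hK)) ⟨hx, rfl⟩)
      · exact Or.inr (lt_of_not_ge hK)
    have hper : ∀ n, ν E ≤ (∑ j ∈ Finset.Icc (-(K:ℤ)) (K:ℤ), ν (A n j)) + ν (Bad K n) := by
      intro n
      calc ν E = ν (τ^[n] ⁻¹' E) :=
            ((hτ.iterate n).measure_preimage hEm.nullMeasurableSet).symm
        _ ≤ ν ((⋃ j ∈ Finset.Icc (-(K:ℤ)) (K:ℤ), A n j) ∪ Bad K n) :=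
            measure_mono (hsub n)
        _ ≤ ν (⋃ j ∈ Finset.Icc (-(K:ℤ)) (K:ℤ), A n j) + ν (Bad K n) := measure_union_le _ _
        _ ≤ (∑ j ∈ Finset.Icc (-(K:ℤ)) (K:ℤ), ν (A n j)) + ν (Bad K n) :=
            add_le_add (measure_biUnion_finset_le _ _) le_rfl
    have hswap : ∑ n ∈ Finset.range N, ∑ j ∈ Finset.Icc (-(K:ℤ)) (K:ℤ), ν (A n j)
        ≤ ((2 * K + 1 : ℕ) : ℝ≥0∞) := by
      rw [Finset.sum_comm]
      have hone : ∀ j ∈ Finset.Icc (-(K:ℤ)) (K:ℤ),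
          ∑ n ∈ Finset.range N, ν (A n j) ≤ 1 := by
        intro j _
        have hd : (↑(Finset.range N) : Set ℕ).PairwiseDisjoint (A · j) := by
          intro m _ n _ hmn
          rcases lt_or_gt_of_ne hmn with h | h
          · exact hdisj j m n h
          · exact (hdisj j n m h).symm
        rw [← measure_biUnion_finset hd fun n _ => hAm n j]
        exact (measure_mono (Set.subset_univ _)).trans_eq measure_univ
      calc ∑ j ∈ Finset.Icc (-(K:ℤ)) (K:ℤ), ∑ n ∈ Finset.range N, ν (A n j)
          ≤ ∑ _j ∈ Finset.Icc (-(K:ℤ)) (K:ℤ), (1 : ℝ≥0∞) := Finset.sum_le_sum hone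
        _ = ((Finset.Icc (-(K:ℤ)) (K:ℤ)).card : ℝ≥0∞) := by simp
        _ = ((2 * K + 1 : ℕ) : ℝ≥0∞) := by
            congr 1
            rw [Int.card_Icc]
            omega
    calc (N : ℝ≥0∞) * ν E = ∑ _n ∈ Finset.range N, ν E := by
          simp [Finset.sum_const, nsmul_eq_mul]
      _ ≤ ∑ n ∈ Finset.range N, ((∑ j ∈ Finset.Icc (-(K:ℤ)) (K:ℤ), ν (A n j)) + ν (Bad K n)) :=
          Finset.sum_le_sum fun n _ => hper n
      _ = (∑ n ∈ Finset.range N, ∑ j ∈ Finset.Icc (-(K:ℤ)) (K:ℤ), ν (A n j))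
          + ∑ n ∈ Finset.range N, ν (Bad K n) := Finset.sum_add_distrib
      _ ≤ ((2 * K + 1 : ℕ) : ℝ≥0∞) + ∑ n ∈ Finset.range N, ν (Bad K n) :=
          add_le_add hswap le_rfl
  -- real version with Markov's inequality
  set a : ℕ → ℝ := fun n => ∫ x, |birkhoffSum τ ψ n x| ∂ν with ha
  have ha_nonneg : ∀ n, 0 ≤ a n := fun n => integral_nonneg fun x => abs_nonneg _
  have hbadK : ∀ K n : ℕ, (ν (Bad K n)).toReal ≤ a n / (K + 1) := by
    intro K n
    have hintS : Integrable (fun x => |birkhoffSum τ ψ n x|) ν :=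
      (integrable_birkhoffSum hτ hint n).abs
    have hsubK : Bad K n ⊆ {x | ((K : ℝ) + 1) ≤ |birkhoffSum τ ψ n x|} := by
      intro x hx
      have h1 : (K : ℤ) + 1 ≤ |birkhoffSum τ φ n x| := hx
      have h2 : |birkhoffSum τ ψ n x| = ((|birkhoffSum τ φ n x| : ℤ) : ℝ) := by
        rw [birkhoffSum_int_cast]; norm_cast
      rw [Set.mem_setOf_eq, h2]
      exact_mod_cast h1
    have hmarkov := mul_meas_ge_le_integral_of_nonneg
      (ae_of_all ν fun x => abs_nonneg (birkhoffSum τ ψ n x)) hintS ((K : ℝ) + 1)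
    have hK1 : (0:ℝ) < (K : ℝ) + 1 := by positivity
    have hmono : (ν (Bad K n)).toReal ≤ (ν {x | ((K:ℝ) + 1) ≤ |birkhoffSum τ ψ n x|}).toReal :=
      ENNReal.toReal_mono (measure_ne_top ν _) (measure_mono hsubK)
    rw [div_eq_inv_mul, ← mul_le_mul_iff_right₀ hK1, ← mul_assoc,
      mul_inv_cancel₀ hK1.ne', one_mul]
    exact le_trans (mul_le_mul_of_nonneg_left hmono hK1.le) hmarkov
  have hreal : ∀ N K : ℕ, (N : ℝ) * (ν E).toReal
      ≤ (2 * (K:ℝ) + 1) + ∑ n ∈ Finset.range N, (ν (Bad K n)).toReal := by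
    intro N K
    have h1 := hmainE N K
    have hfin : ((2 * K + 1 : ℕ) : ℝ≥0∞) + ∑ n ∈ Finset.range N, ν (Bad K n) ≠ ⊤ := by
      refine ENNReal.add_ne_top.mpr ⟨ENNReal.natCast_ne_top _, ?_⟩
      exact (ENNReal.sum_lt_top.mpr fun n _ => measure_lt_top ν _).ne
    have h2 := ENNReal.toReal_mono hfin h1
    rw [ENNReal.toReal_mul,
      ENNReal.toReal_add (ENNReal.natCast_ne_top _)
        (ENNReal.sum_lt_top.mpr fun n _ => measure_lt_top ν _).ne,
      ENNReal.toReal_sum (fun n _ => measure_ne_top ν _)] at h2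
    simp only [ENNReal.toReal_natCast] at h2
    calc (N : ℝ) * (ν E).toReal ≤ ((2 * K + 1 : ℕ) : ℝ)
          + ∑ n ∈ Finset.range N, (ν (Bad K n)).toReal := h2
      _ = (2 * (K:ℝ) + 1) + ∑ n ∈ Finset.range N, (ν (Bad K n)).toReal := by push_cast; ring
  -- conclude via the L¹ mean ergodic theorem
  set e : ℝ := (ν E).toReal with he
  have hb := l1_mean_ergodic hτ herg hmψ hint hzero
  have hab : ∀ n : ℕ, 0 < n → a n = n * ∫ x, |birkhoffAverage ℝ τ ψ n x| ∂ν := by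
    intro n hn
    have h1 : ∀ x, |birkhoffAverage ℝ τ ψ n x| = (n : ℝ)⁻¹ * |birkhoffSum τ ψ n x| := by
      intro x
      simp [birkhoffAverage, abs_mul, smul_eq_mul, abs_of_nonneg (by positivity : (0:ℝ) ≤ (n:ℝ)⁻¹)]
    simp only [ha, h1]
    rw [integral_const_mul, ← mul_assoc, mul_inv_cancel₀ (by exact_mod_cast hn.ne' : (n:ℝ) ≠ 0),
      one_mul]
  have he4 : ∀ ε : ℝ, 0 < ε → e ≤ 4 * ε := by
    intro ε hε
    have hces := hb.cesaro
    have h3N := tendsto_const_div_atTop_nhds_zero_nat (3:ℝ)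
    obtain ⟨N, hN1, hN3, hNc⟩ : ∃ N : ℕ, 1 ≤ N ∧ 3 / (N:ℝ) < ε ∧
        (N:ℝ)⁻¹ * ∑ i ∈ Finset.range N, (∫ x, |birkhoffAverage ℝ τ ψ i x| ∂ν) < ε * ε := by
      have h1 := eventually_ge_atTop 1
      have h2 := h3N.eventually (gt_mem_nhds hε)
      have h3 := hces.eventually (gt_mem_nhds (by positivity : (0:ℝ) < ε * ε))
      obtain ⟨N, hN⟩ := (h1.and (h2.and h3)).exists
      exact ⟨N, hN.1, hN.2.1, hN.2.2⟩
    set K : ℕ := ⌈ε * N⌉₊ with hK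
    have hKle : (K : ℝ) < ε * N + 1 := Nat.ceil_lt_add_one (by positivity)
    have hKge : ε * N ≤ (K : ℝ) + 1 := (Nat.le_ceil _).trans (by linarith [Nat.le_ceil (ε * N)])
    have hNpos : (0:ℝ) < N := by exact_mod_cast hN1
    -- bound on the sum of a n
    have hsuma : ∑ n ∈ Finset.range N, a n
        ≤ (N : ℝ) * ∑ n ∈ Finset.range N, (∫ x, |birkhoffAverage ℝ τ ψ n x| ∂ν) := by
      rw [Finset.mul_sum]
      refine Finset.sum_le_sum fun n hn => ?_
      rcases Nat.eq_zero_or_pos n with h | h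
      · subst h
        simp only [ha, birkhoffSum]
        simp only [Finset.range_zero, Finset.sum_empty, abs_zero]
        have : (0:ℝ) ≤ (N:ℝ) * ∫ x, |birkhoffAverage ℝ τ ψ 0 x| ∂ν := by
          have := (integral_nonneg (fun x => abs_nonneg (birkhoffAverage ℝ τ ψ 0 x)) : 0 ≤ ∫ x, |birkhoffAverage ℝ τ ψ 0 x| ∂ν)
          positivity
        simpa using this
      · rw [hab n h]
        have hnn : (n : ℝ) ≤ N := by
          exact_mod_cast (Finset.mem_range.mp hn).le
        have hpos := (integral_nonneg (fun x => abs_nonneg (birkhoffAverage ℝ τ ψ n x)) : 0 ≤ ∫ x, |birkhoffAverage ℝ τ ψ n x| ∂ν)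
        exact mul_le_mul_of_nonneg_right hnn hpos
    have hKpos : (0:ℝ) < (K:ℝ) + 1 := by positivity
    have hmain := hreal N K
    have hbads : ∑ n ∈ Finset.range N, (ν (Bad K n)).toReal
        ≤ (∑ n ∈ Finset.range N, a n) / ((K:ℝ) + 1) := by
      rw [Finset.sum_div]
      exact Finset.sum_le_sum fun n _ => hbadK K n
    -- combine everything
    have h5 : (N:ℝ) * e ≤ (2 * (ε * N + 1) + 1) + ((N:ℝ) * ((N:ℝ)⁻¹ *
        ∑ i ∈ Finset.range N, (∫ x, |birkhoffAverage ℝ τ ψ i x| ∂ν)) * N) / ((K:ℝ) + 1) := by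
      have h6 : (∑ n ∈ Finset.range N, a n) / ((K:ℝ) + 1)
          ≤ ((N:ℝ) * ((N:ℝ)⁻¹ * ∑ i ∈ Finset.range N,
            (∫ x, |birkhoffAverage ℝ τ ψ i x| ∂ν)) * N) / ((K:ℝ) + 1) := by
        refine div_le_div_of_nonneg_right ?_ hKpos.le
        calc ∑ n ∈ Finset.range N, a n
            ≤ (N:ℝ) * ∑ i ∈ Finset.range N, (∫ x, |birkhoffAverage ℝ τ ψ i x| ∂ν) := hsuma
          _ = (N:ℝ) * ((N:ℝ)⁻¹ * ∑ i ∈ Finset.range N,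
              (∫ x, |birkhoffAverage ℝ τ ψ i x| ∂ν)) * (N:ℝ) := by
              field_simp
      calc (N:ℝ) * e ≤ (2 * (K:ℝ) + 1) + ∑ n ∈ Finset.range N, (ν (Bad K n)).toReal := hmain
        _ ≤ (2 * (ε * N + 1) + 1) + (∑ n ∈ Finset.range N, a n) / ((K:ℝ) + 1) := by
            have := hbads
            have h7 : 2 * (K:ℝ) + 1 ≤ 2 * (ε * N + 1) + 1 := by nlinarith
            linarith
        _ ≤ _ := by linarith [h6]
    -- divide by N
    have h8 : ((N:ℝ) * ((N:ℝ)⁻¹ * ∑ i ∈ Finset.range N,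
        (∫ x, |birkhoffAverage ℝ τ ψ i x| ∂ν)) * N) / ((K:ℝ) + 1) ≤ ε * N := by
      set S := (N:ℝ)⁻¹ * ∑ i ∈ Finset.range N, (∫ x, |birkhoffAverage ℝ τ ψ i x| ∂ν) with hS
      have hS0 : 0 ≤ S := by
        rw [hS]
        have := Finset.sum_nonneg (fun i (_ : i ∈ Finset.range N) =>
          (integral_nonneg (fun x => abs_nonneg (birkhoffAverage ℝ τ ψ i x)) : 0 ≤ ∫ x, |birkhoffAverage ℝ τ ψ i x| ∂ν))
        positivity
      have hSlt : S < ε * ε := hNc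
      calc ((N:ℝ) * S * N) / ((K:ℝ) + 1) ≤ ((N:ℝ) * S * N) / (ε * N) := by
            apply div_le_div_of_nonneg_left ?_ (by positivity) hKge
            positivity
        _ = S * N / ε := by
            rw [div_eq_div_iff (by positivity) hε.ne']
            ring
        _ ≤ (ε * ε) * N / ε := by
            refine div_le_div_of_nonneg_right ?_ hε.le
            nlinarith
        _ = ε * N := by field_simp
    have h9 : (N:ℝ) * e ≤ 2 * ε * N + 3 + ε * N := by nlinarith
    have h10 : e ≤ 2 * ε + 3 / (N:ℝ) + ε := by
      have h12 : (N:ℝ) * (2 * ε + 3 / (N:ℝ) + ε) = 2 * ε * (N:ℝ) + 3 + ε * (N:ℝ) := by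
        field_simp
      refine le_of_mul_le_mul_left ?_ hNpos
      rw [h12]
      linarith
    linarith [hN3]
  -- finish
  have he0 : e = 0 := by
    by_contra h
    have hpos : 0 < e := lt_of_le_of_ne ENNReal.toReal_nonneg (Ne.symm h)
    have := he4 (e / 8) (by positivity)
    linarith
  have := (ENNReal.toReal_eq_zero_iff _).mp he0
  rcases this with h | h
  · exact h
  · exact absurd h (measure_ne_top ν E)

end Main
/-- Atkinson's recurrence theorem: for a conservative ergodic probability-preserving system
`(X, τ, ν)` and an integrable `φ : X → ℤ` with zero mean, the skew product
`τ̃(x,k) = (τ x, k + φ x)` on `X × ℤ` with measure `ν × count` is conservative. -/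
theorem atkinson_recurrence
    {X : Type*} [MeasurableSpace X] (ν : Measure X) [IsProbabilityMeasure ν]
    (τ : X → X) (hτ : MeasurePreserving τ ν ν)
    (herg : Ergodic τ ν) (hcons : Conservative τ ν)
    (φ : X → ℤ) (hmeas : Measurable φ)
    (hint : Integrable (fun x => (φ x : ℝ)) ν)
    (hzero : ∫ x, (φ x : ℝ) ∂ν = 0) :
    ∀ B : Set (X × ℤ), MeasurableSet B → 0 < (ν.prod Measure.count) B →
      ∀ᵐ p ∂(ν.prod Measure.count), p ∈ B →
        ∃ n > 0, (fun q : X × ℤ => (τ q.1, q.2 + φ q.1))^[n] p ∈ B := by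
  intro B hB _hBpos
  classical
  set T : X × ℤ → X × ℤ := fun q => (τ q.1, q.2 + φ q.1) with hTdef
  have hTm : Measurable T :=
    (hτ.measurable.comp measurable_fst).prodMk
      (measurable_snd.add (hmeas.comp measurable_fst))
  -- the set of points of `B` that never return to `B`
  set P : Set (X × ℤ) := B ∩ ⋂ (n : ℕ), ⋂ (_ : 0 < n), T^[n] ⁻¹' Bᶜ with hPdef
  have hPmem : ∀ p : X × ℤ, p ∈ P ↔ p ∈ B ∧ ∀ n : ℕ, 0 < n → T^[n] p ∉ B := by
    intro p
    simp only [hPdef, Set.mem_inter_iff, Set.mem_iInter, Set.mem_preimage, Set.mem_compl_iff]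
  have hPm : MeasurableSet P :=
    hB.inter (MeasurableSet.iInter fun n => MeasurableSet.iInter fun _ =>
      (hTm.iterate n) hB.compl)
  -- the fibres of `P`
  set E : ℤ → Set X := fun k => {x | (x, k) ∈ P} with hE
  have hEm : ∀ k, MeasurableSet (E k) := fun k =>
    hPm.preimage (measurable_id.prodMk measurable_const)
  -- each fibre is null, by the key lemma
  have hE0 : ∀ k, ν (E k) = 0 := by
    intro k
    refine null_of_no_zero_return ν τ hτ herg φ hmeas hint hzero (E k) (hEm k) ?_
    intro x hx n hn hcontra
    obtain ⟨h1, h2⟩ := hcontra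
    have hx2 := ((hPmem (x, k)).mp hx).2 n hn
    have hiter := skew_iterate τ φ n (x, k)
    rw [← hTdef] at hiter
    rw [hiter] at hx2
    simp only [h2, add_zero] at hx2
    exact hx2 ((hPmem (τ^[n] x, k)).mp h1).1
  -- hence `P` is null
  have hμP : (ν.prod Measure.count) P = 0 := by
    have hPsub : P ⊆ ⋃ k : ℤ, (E k) ×ˢ ({k} : Set ℤ) := by
      intro p hp
      refine Set.mem_iUnion.2 ⟨p.2, ?_⟩
      constructor
      · show (p.1, p.2) ∈ P
        simpa using hp
      · rfl
    refine le_antisymm ?_ zero_le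
    refine le_trans (measure_mono hPsub) ?_
    refine le_trans (measure_iUnion_le _) (le_of_eq (ENNReal.tsum_eq_zero.mpr ?_))
    intro k
    rw [Measure.prod_prod, hE0 k, zero_mul]
  -- conclusion
  have hae : ∀ᵐ p ∂(ν.prod Measure.count), p ∉ P := measure_eq_zero_iff_ae_notMem.mp hμP
  filter_upwards [hae] with p hp hpB
  by_contra hcon
  push_neg at hcon
  exact hp ((hPmem p).mpr ⟨hpB, fun n hn => hcon n hn⟩)
end

section
/- Every measure-preserving transformation (X, τ, ν) on a σ-finite measure space decomposes uniquely (mod null sets) into a disjoint union X = X_cnsv ∪ X_dspt of two invariant measurable sets, such that τ restricted to X_cnsv is conservative and τ restricted to X_dspt is dissipative. -/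
open MeasureTheory Set
open scoped symmDiff ENNReal
set_option linter.unusedSectionVars false


/-- `τ` restricted to `C` is conservative: every positive-measure measurable subset of `C`
recurs almost everywhere. -/
def ConservativeOn {X : Type*} [MeasurableSpace X] (τ : X → X) (ν : Measure X)
    (C : Set X) : Prop :=
  ∀ B : Set X, B ⊆ C → MeasurableSet B → 0 < ν B →
    ∀ᵐ x ∂ν, x ∈ B → ∃ n > 0, τ^[n] x ∈ B

/-- `f` restricted to `D` is dissipative: `D` is (mod null sets) the disjoint union of the
iterates `f^k A`, `k ∈ ℤ`, of a wandering set `A`. -/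
def DissipativeOn {X : Type*} [MeasurableSpace X] (f : Equiv.Perm X) (ν : Measure X)
    (D : Set X) : Prop :=
  ∃ A : Set X, MeasurableSet A ∧
    (Pairwise fun k l : ℤ =>
      Disjoint (((f ^ k : Equiv.Perm X) : X → X) '' A) (((f ^ l : Equiv.Perm X) : X → X) '' A)) ∧
    ν (D ∆ (⋃ k : ℤ, ((f ^ k : Equiv.Perm X) : X → X) '' A)) = 0


namespace HopfAux

variable {X : Type*} [MeasurableSpace X] (f : Equiv.Perm X)

/-- The saturation of a set under all integer iterates. -/
def sat (A : Set X) : Set X := ⋃ k : ℤ, ((f ^ k : Equiv.Perm X) : X → X) '' A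

/-- A wandering set. -/
def Wand (A : Set X) : Prop :=
  MeasurableSet A ∧ Pairwise fun k l : ℤ =>
    Disjoint (((f ^ k : Equiv.Perm X) : X → X) '' A) (((f ^ l : Equiv.Perm X) : X → X) '' A)

lemma zpow_image_eq_preimage (k : ℤ) (A : Set X) :
    ((f ^ k : Equiv.Perm X) : X → X) '' A = ((f ^ (-k) : Equiv.Perm X) : X → X) ⁻¹' A := by
  rw [Equiv.image_eq_preimage_symm, zpow_neg, ← Equiv.Perm.inv_def]

lemma image_zpow_image (k l : ℤ) (A : Set X) :
    ((f ^ k : Equiv.Perm X) : X → X) '' (((f ^ l : Equiv.Perm X) : X → X) '' A)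
      = ((f ^ (k + l) : Equiv.Perm X) : X → X) '' A := by
  rw [← Set.image_comp, ← Equiv.Perm.coe_mul, ← zpow_add]

lemma subset_sat (A : Set X) : A ⊆ sat f A := by
  intro x hx
  exact mem_iUnion.2 ⟨0, by simpa using hx⟩

lemma sat_mono {A B : Set X} (h : A ⊆ B) : sat f A ⊆ sat f B :=
  iUnion_mono fun k => image_mono h

lemma sat_union (A B : Set X) : sat f (A ∪ B) = sat f A ∪ sat f B := by
  simp only [sat, image_union, iUnion_union_distrib]

lemma image_zpow_sat (m : ℤ) (A : Set X) :
    ((f ^ m : Equiv.Perm X) : X → X) '' sat f A = sat f A := by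
  rw [sat, image_iUnion]
  simp_rw [image_zpow_image]
  apply subset_antisymm
  · exact iUnion_subset fun k => subset_iUnion_of_subset (m + k) le_rfl
  · exact iUnion_subset fun k => subset_iUnion_of_subset (k - m)
      (by rw [add_sub_cancel])

lemma zpow_image_subset_sat (k : ℤ) (A : Set X) :
    ((f ^ k : Equiv.Perm X) : X → X) '' A ⊆ sat f A :=
  subset_iUnion (fun k : ℤ => ((f ^ k : Equiv.Perm X) : X → X) '' A) k

lemma preimage_zpow_sat (m : ℤ) (A : Set X) :
    ((f ^ m : Equiv.Perm X) : X → X) ⁻¹' sat f A = sat f A := by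
  have h := zpow_image_eq_preimage f (-m) (sat f A)
  rw [neg_neg] at h
  rw [← h, image_zpow_sat]

lemma preimage_f_sat (A : Set X) : ⇑f ⁻¹' sat f A = sat f A := by
  have := preimage_zpow_sat f 1 A
  rwa [zpow_one] at this

lemma image_zpow_compl_sat (m : ℤ) (A : Set X) :
    ((f ^ m : Equiv.Perm X) : X → X) '' (sat f A)ᶜ = (sat f A)ᶜ := by
  rw [Equiv.image_compl, image_zpow_sat]

variable {f}

lemma measurable_zpow (hf : Measurable f) (hf' : Measurable f.symm) (k : ℤ) :
    Measurable ((f ^ k : Equiv.Perm X) : X → X) := by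
  induction k using Int.induction_on with
  | zero => simpa using measurable_id
  | succ n ih =>
      rw [zpow_add_one, Equiv.Perm.coe_mul]
      exact ih.comp hf
  | pred n ih =>
      rw [zpow_sub_one, Equiv.Perm.coe_mul, Equiv.Perm.inv_def]
      exact ih.comp hf'

lemma mp_zpow {ν : Measure X} (hf : Measurable f) (hf' : Measurable f.symm)
    (hpres : MeasurePreserving f ν ν) (k : ℤ) :
    MeasurePreserving ((f ^ k : Equiv.Perm X) : X → X) ν ν := by
  induction k using Int.induction_on with
  | zero => simpa using MeasurePreserving.id ν
  | succ n ih =>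
      rw [zpow_add_one, Equiv.Perm.coe_mul]
      exact ih.comp hpres
  | pred n ih =>
      have hinv : MeasurePreserving (⇑f⁻¹) ν ν := by
        rw [Equiv.Perm.inv_def]
        constructor
        · exact hf'
        · ext s hs
          rw [Measure.map_apply hf' hs, ← hpres.measure_preimage (hf' hs).nullMeasurableSet]
          congr 1
          exact (f.preimage_symm_preimage s).symm ▸ rfl
      rw [zpow_sub_one, Equiv.Perm.coe_mul, Equiv.Perm.inv_def]
      exact ih.comp (Equiv.Perm.inv_def f ▸ hinv)


lemma measurableSet_zpow_image (hf : Measurable f) (hf' : Measurable f.symm) (k : ℤ)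
    {A : Set X} (hA : MeasurableSet A) :
    MeasurableSet (((f ^ k : Equiv.Perm X) : X → X) '' A) := by
  rw [zpow_image_eq_preimage]
  exact measurable_zpow hf hf' (-k) hA

lemma measurableSet_sat (hf : Measurable f) (hf' : Measurable f.symm)
    {A : Set X} (hA : MeasurableSet A) : MeasurableSet (sat f A) :=
  MeasurableSet.iUnion fun k => measurableSet_zpow_image hf hf' k hA

lemma measure_zpow_image {ν : Measure X} (hf : Measurable f) (hf' : Measurable f.symm)
    (hpres : MeasurePreserving f ν ν) (k : ℤ) {A : Set X} (hA : MeasurableSet A) :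
    ν (((f ^ k : Equiv.Perm X) : X → X) '' A) = ν A := by
  rw [zpow_image_eq_preimage]
  exact (mp_zpow hf hf' hpres (-k)).measure_preimage hA.nullMeasurableSet

/-- To prove a set is wandering it suffices to show positive iterates never return. -/
lemma wand_of_no_return {A : Set X} (hA : MeasurableSet A)
    (h : ∀ n : ℕ, 0 < n → ∀ x ∈ A, f^[n] x ∉ A) : Wand f A := by
  refine ⟨hA, ?_⟩
  have key : ∀ k l : ℤ, k < l →
      Disjoint (((f ^ k : Equiv.Perm X) : X → X) '' A) (((f ^ l : Equiv.Perm X) : X → X) '' A) := by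
    intro k l hkl
    rw [Set.disjoint_left]
    rintro x ⟨a, ha, rfl⟩ ⟨b, hb, hba⟩
    have h2 : (f ^ (-k) * f ^ l) b = (f ^ (-k) * f ^ k) a := by
      simp only [Equiv.Perm.mul_apply, hba]
    rw [← zpow_add, ← zpow_add, neg_add_cancel] at h2
    simp only [zpow_zero, Equiv.Perm.coe_one, id_eq] at h2
    set n : ℕ := (-k + l).toNat with hn
    have hln : (-k + l) = (n : ℤ) := (Int.toNat_of_nonneg (by omega)).symm
    have hcoe : ((f ^ (-k + l) : Equiv.Perm X) : X → X) = f^[n] := by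
      rw [hln, zpow_natCast, Equiv.Perm.coe_pow]
    exact h n (by omega) b hb (by rw [← hcoe, h2]; exact ha)
  intro k l hkl
  rcases lt_or_gt_of_ne hkl with h' | h'
  · exact key k l h'
  · exact (key l k h').symm

/-- A wandering set never returns under positive iterates. -/
lemma wand_no_return {A : Set X} (hA : Wand f A) {n : ℕ} (hn : 0 < n)
    {x : X} (hx : x ∈ A) : f^[n] x ∉ A := by
  intro hfx
  have hd : Disjoint (((f ^ (0:ℤ) : Equiv.Perm X) : X → X) '' A)
      (((f ^ (n:ℤ) : Equiv.Perm X) : X → X) '' A) := hA.2 (show (0 : ℤ) ≠ (n : ℤ) by omega)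
  rw [Set.disjoint_left] at hd
  refine hd (a := f^[n] x) ?_ ?_
  · simpa using hfx
  · rw [zpow_natCast, ← Equiv.Perm.iterate_eq_pow]
    exact ⟨x, hx, rfl⟩

lemma wand_mono {A B : Set X} (hB : Wand f B) (hA : MeasurableSet A) (h : A ⊆ B) :
    Wand f A :=
  ⟨hA, fun k l hkl => (hB.2 hkl).mono (image_mono h) (image_mono h)⟩

lemma wand_empty : Wand f (∅ : Set X) :=
  ⟨MeasurableSet.empty, fun k l _ => by simp⟩

/-- Union of a wandering set with another wandering set outside its saturation. -/
lemma wand_union {A B : Set X} (hA : Wand f A) (hB : Wand f B) (hd : B ⊆ (sat f A)ᶜ) :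
    Wand f (A ∪ B) := by
  have cross : ∀ k l : ℤ, Disjoint (((f ^ k : Equiv.Perm X) : X → X) '' A)
      (((f ^ l : Equiv.Perm X) : X → X) '' B) := by
    intro k l
    have h1 : ((f ^ k : Equiv.Perm X) : X → X) '' A ⊆ sat f A := zpow_image_subset_sat f k A
    have h2 : ((f ^ l : Equiv.Perm X) : X → X) '' B ⊆ (sat f A)ᶜ := by
      rw [← image_zpow_compl_sat f l A]
      exact image_mono hd
    exact (disjoint_compl_right.mono h1 h2)
  refine ⟨hA.1.union hB.1, fun k l hkl => ?_⟩
  simp only [image_union]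
  refine Set.disjoint_union_left.2 ⟨Set.disjoint_union_right.2 ⟨hA.2 hkl, cross k l⟩,
    Set.disjoint_union_right.2 ⟨(cross l k).symm, hB.2 hkl⟩⟩



section Max
variable {ν : Measure X}

lemma sat_iUnion {ι : Sort*} (f : Equiv.Perm X) (A : ι → Set X) :
    sat f (⋃ i, A i) = ⋃ i, sat f (A i) := by
  simp only [sat, image_iUnion]
  exact iUnion_comm _

lemma sat_sat (f : Equiv.Perm X) (A : Set X) : sat f (sat f A) = sat f A := by
  apply subset_antisymm
  · refine iUnion_subset fun k => ?_
    rw [image_zpow_sat]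
  · exact subset_sat f _

/-- Existence of a maximal wandering set. -/
lemma exists_max_wand [SigmaFinite ν] (hf : Measurable f) (hf' : Measurable f.symm)
    (hpres : MeasurePreserving f ν ν) :
    ∃ M : Set X, Wand f M ∧ ∀ E : Set X, Wand f E → E ⊆ (sat f M)ᶜ → ν E = 0 := by
  obtain ⟨μ, hμfin, hνμ, hμν⟩ := exists_isFiniteMeasure_absolutelyContinuous ν
  set S : Set ℝ≥0∞ := {r | ∃ A : Set X, Wand f A ∧ μ (sat f A) = r} with hS
  set s : ℝ≥0∞ := sSup S with hs
  have hs_le : s ≤ μ univ := sSup_le (by rintro r ⟨A, -, rfl⟩; exact measure_mono (subset_univ _))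
  have hs_top : s ≠ ⊤ := (lt_of_le_of_lt hs_le (measure_lt_top μ univ)).ne
  have hseq : ∀ n : ℕ, ∃ A : Set X, Wand f A ∧ s ≤ μ (sat f A) + (n : ℝ≥0∞)⁻¹ := by
    intro n
    by_cases h0 : s = 0
    · exact ⟨∅, wand_empty, by simp [h0]⟩
    · have hlt : s - (n : ℝ≥0∞)⁻¹ < s :=
        ENNReal.sub_lt_self hs_top h0 (ENNReal.inv_ne_zero.2 (ENNReal.natCast_ne_top n))
      obtain ⟨r, ⟨A, hA, rfl⟩, hr⟩ := lt_sSup_iff.1 hlt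
      exact ⟨A, hA, tsub_le_iff_right.1 hr.le⟩
  choose A hAw hAs using hseq
  set B : ℕ → Set X := fun n => A n \ ⋃ (m : ℕ) (_ : m < n), sat f (A m) with hB
  have hBmeas : ∀ n, MeasurableSet (B n) := fun n =>
    ((hAw n).1).diff (MeasurableSet.iUnion fun m => MeasurableSet.iUnion fun _ =>
      measurableSet_sat hf hf' (hAw m).1)
  have hBw : ∀ n, Wand f (B n) := fun n => wand_mono (hAw n) (hBmeas n) diff_subset
  have hBdisj : ∀ m n : ℕ, m < n → B n ⊆ (sat f (A m))ᶜ := by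
    intro m n hmn x hx hxs
    exact hx.2 (mem_iUnion.2 ⟨m, mem_iUnion.2 ⟨hmn, hxs⟩⟩)
  set M : Set X := ⋃ n, B n with hM
  have cross : ∀ m n : ℕ, m < n → ∀ k l : ℤ,
      Disjoint (((f ^ k : Equiv.Perm X) : X → X) '' B m)
        (((f ^ l : Equiv.Perm X) : X → X) '' B n) := by
    intro m n hmn k l
    have h1 : ((f ^ k : Equiv.Perm X) : X → X) '' B m ⊆ sat f (A m) := by
      refine (image_mono diff_subset).trans ?_
      rw [← image_zpow_sat f k (A m)]
      exact image_mono (subset_sat f _)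
    have h2 : ((f ^ l : Equiv.Perm X) : X → X) '' B n ⊆ (sat f (A m))ᶜ := by
      rw [← image_zpow_compl_sat f l (A m)]
      exact image_mono (hBdisj m n hmn)
    exact disjoint_compl_right.mono h1 h2
  have hMw : Wand f M := by
    refine ⟨MeasurableSet.iUnion hBmeas, fun k l hkl => ?_⟩
    simp only [hM, image_iUnion]
    rw [disjoint_iUnion_left]
    intro m
    rw [disjoint_iUnion_right]
    intro n
    rcases lt_trichotomy m n with h | rfl | h
    · exact cross m n h k l
    · exact (hBw m).2 hkl
    · exact (cross n m h l k).symm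
  have hsatA : ∀ n : ℕ, sat f (A n) ⊆ sat f M := by
    intro n
    induction n using Nat.strong_induction_on with
    | _ n ih =>
      have hsub : A n ⊆ B n ∪ ⋃ (m : ℕ) (_ : m < n), sat f (A m) := by
        intro x hx
        by_cases hxs : x ∈ ⋃ (m : ℕ) (_ : m < n), sat f (A m)
        · exact Or.inr hxs
        · exact Or.inl ⟨hx, hxs⟩
      calc sat f (A n) ⊆ sat f (B n ∪ ⋃ (m : ℕ) (_ : m < n), sat f (A m)) := sat_mono f hsub
        _ = sat f (B n) ∪ ⋃ (m : ℕ) (_ : m < n), sat f (A m) := by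
            rw [sat_union, sat_iUnion]
            congr 1
            refine iUnion_congr fun m => ?_
            rw [sat_iUnion]
            exact iUnion_congr fun hm => sat_sat f (A m)
        _ ⊆ sat f M := by
            refine union_subset (sat_mono f (subset_iUnion B n)) ?_
            exact iUnion_subset fun m => iUnion_subset fun hm => ih m hm
  have hle : μ (sat f M) ≤ s := le_sSup ⟨M, hMw, rfl⟩
  have hge : s ≤ μ (sat f M) := by
    refine ENNReal.le_of_forall_pos_le_add fun ε hε hfin => ?_
    obtain ⟨n, hn⟩ := ENNReal.exists_inv_nat_lt (show (ε : ℝ≥0∞) ≠ 0 by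
      exact_mod_cast hε.ne')
    calc s ≤ μ (sat f (A n)) + (n : ℝ≥0∞)⁻¹ := hAs n
      _ ≤ μ (sat f M) + ε := add_le_add (measure_mono (hsatA n)) hn.le
  refine ⟨M, hMw, fun E hE hEsub => ?_⟩
  have hsatE : sat f E ⊆ (sat f M)ᶜ := by
    refine iUnion_subset fun k => ?_
    rw [← image_zpow_compl_sat f k M]
    exact image_mono hEsub
  have hUw : Wand f (M ∪ E) := wand_union hMw hE hEsub
  have hdisj : Disjoint (sat f M) (sat f E) := disjoint_compl_right.mono_right hsatE
  have hadd : μ (sat f M) + μ (sat f E) ≤ s := by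
    have : μ (sat f (M ∪ E)) ≤ s := le_sSup ⟨M ∪ E, hUw, rfl⟩
    rwa [sat_union, measure_union hdisj (measurableSet_sat hf hf' hE.1)] at this
  have hμE : μ (sat f E) = 0 := by
    have h1 : μ (sat f M) + μ (sat f E) ≤ μ (sat f M) + 0 := by
      rw [add_zero]; exact hadd.trans hge
    have := ENNReal.le_of_add_le_add_left (lt_of_le_of_lt hle
      (lt_of_le_of_lt hs_le (measure_lt_top μ univ))).ne h1
    exact le_antisymm this zero_le
  exact hνμ (measure_mono_null (subset_sat f E) hμE)

/-- The complement of the saturation of a maximal wandering set is conservative. -/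
lemma conservativeOn_of_max (hf : Measurable f)
    {M : Set X} (hmax : ∀ E : Set X, Wand f E → E ⊆ (sat f M)ᶜ → ν E = 0) :
    ConservativeOn (⇑f) ν ((sat f M)ᶜ) := by
  intro B hBsub hBmeas _
  set N : Set X := B ∩ ⋂ n : ℕ, f^[n + 1] ⁻¹' Bᶜ with hN
  have hNmeas : MeasurableSet N :=
    hBmeas.inter (MeasurableSet.iInter fun n => (hf.iterate (n + 1)) hBmeas.compl)
  have hNw : Wand f N := by
    refine wand_of_no_return hNmeas fun n hn x hx hfx => ?_
    obtain ⟨m, rfl⟩ : ∃ m, n = m + 1 := ⟨n - 1, by omega⟩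
    exact (mem_iInter.1 hx.2 m) hfx.1
  have hNnull : ν N = 0 := hmax N hNw ((inter_subset_left).trans hBsub)
  rw [ae_iff]
  refine measure_mono_null (fun x hx => ?_) hNnull
  simp only [mem_setOf_eq, not_forall, not_exists] at hx
  push_neg at hx
  obtain ⟨hxB, hret⟩ := hx
  exact ⟨hxB, mem_iInter.2 fun n => hret (n + 1) (Nat.succ_pos n)⟩

/-- A wandering set meets a conservative region in a null set. -/
lemma wand_inter_conservative_null {E : Set X} (hE : Wand f E) {C : Set X}
    (hC : MeasurableSet C) (hcons : ConservativeOn (⇑f) ν C) : ν (E ∩ C) = 0 := by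
  by_contra h
  have hpos : 0 < ν (E ∩ C) := pos_iff_ne_zero.2 h
  have hae := hcons (E ∩ C) inter_subset_right (hE.1.inter hC) hpos
  have hnone : ∀ x ∈ E ∩ C, ¬∃ n > 0, f^[n] x ∈ E ∩ C := by
    rintro x hx ⟨n, hn, hfx⟩
    exact wand_no_return hE hn hx.1 hfx.1
  have : ∀ᵐ x ∂ν, x ∉ E ∩ C :=
    hae.mono fun x hx hxB => hnone x hxB (hx hxB)
  exact h (measure_eq_zero_iff_ae_notMem.2 this)

/-- Invariance mod null passes to all integer powers. -/
lemma zpow_preimage_ae_eq (hf : Measurable f) (hf' : Measurable f.symm)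
    (hpres : MeasurePreserving f ν ν) {C : Set X}
    (hinv : ⇑f ⁻¹' C =ᵐ[ν] C) (k : ℤ) :
    ((f ^ k : Equiv.Perm X) : X → X) ⁻¹' C =ᵐ[ν] C := by
  have hqmp : ∀ m : ℤ, Measure.QuasiMeasurePreserving ((f ^ m : Equiv.Perm X) : X → X) ν ν :=
    fun m => (mp_zpow hf hf' hpres m).quasiMeasurePreserving
  induction k using Int.induction_on with
  | zero => simp; exact ae_eq_refl C
  | succ n ih =>
      have h1 : ((f ^ (n + 1 : ℤ) : Equiv.Perm X) : X → X) ⁻¹' C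
          = ⇑f ⁻¹' (((f ^ (n : ℤ) : Equiv.Perm X) : X → X) ⁻¹' C) := by
        rw [zpow_add_one, Equiv.Perm.coe_mul, preimage_comp]
      rw [h1]
      exact (hpres.quasiMeasurePreserving.preimage_ae_eq ih).trans hinv
  | pred n ih =>
      have hsymm : MeasurePreserving (⇑f.symm) ν ν := by
        have := mp_zpow hf hf' hpres (-1)
        rwa [zpow_neg_one, Equiv.Perm.inv_def] at this
      have hinv' : ⇑f.symm ⁻¹' C =ᵐ[ν] C := by
        have h2 := hsymm.quasiMeasurePreserving.preimage_ae_eq hinv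
        have h3 : ⇑f.symm ⁻¹' (⇑f ⁻¹' C) = C := by
          rw [← preimage_comp]
          simp
        rw [h3] at h2
        exact h2.symm
      have h1 : ((f ^ (-n - 1 : ℤ) : Equiv.Perm X) : X → X) ⁻¹' C
          = ⇑f.symm ⁻¹' (((f ^ (-n : ℤ) : Equiv.Perm X) : X → X) ⁻¹' C) := by
        rw [zpow_sub_one, Equiv.Perm.coe_mul, Equiv.Perm.inv_def, preimage_comp]
      rw [h1]
      exact (hsymm.quasiMeasurePreserving.preimage_ae_eq ih).trans hinv'

/-- The saturation of a wandering set meets an almost-invariant conservative region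
in a null set. -/
lemma sat_inter_conservative_null (hf : Measurable f) (hf' : Measurable f.symm)
    (hpres : MeasurePreserving f ν ν) {E C : Set X} (hE : Wand f E)
    (hC : MeasurableSet C) (hcons : ConservativeOn (⇑f) ν C)
    (hinv : ⇑f ⁻¹' C =ᵐ[ν] C) : ν (sat f E ∩ C) = 0 := by
  have hk : ∀ k : ℤ, ν (((f ^ k : Equiv.Perm X) : X → X) '' E ∩ C) = 0 := by
    intro k
    have h1 : ((f ^ k : Equiv.Perm X) : X → X) '' E ∩ C
        = ((f ^ k : Equiv.Perm X) : X → X) '' (E ∩ ((f ^ k : Equiv.Perm X) : X → X) ⁻¹' C) :=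
      (image_inter_preimage _ _ _).symm
    rw [h1, measure_zpow_image hf hf' hpres k (hE.1.inter (measurable_zpow hf hf' k hC))]
    have h2 : (E ∩ ((f ^ k : Equiv.Perm X) : X → X) ⁻¹' C : Set X) =ᵐ[ν] (E ∩ C : Set X) :=
      ae_eq_set_inter (ae_eq_refl E) (zpow_preimage_ae_eq hf hf' hpres hinv k)
    rw [measure_congr h2]
    exact wand_inter_conservative_null hE hC hcons
  have : sat f E ∩ C = ⋃ k : ℤ, ((f ^ k : Equiv.Perm X) : X → X) '' E ∩ C := by
    rw [sat, iUnion_inter]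
  rw [this]
  exact le_antisymm ((measure_iUnion_le _).trans (by simp [hk])) zero_le

end Max
end HopfAux

open HopfAux

/-- Hopf decomposition: every invertible measure-preserving transformation of a σ-finite
measure space decomposes uniquely (mod null sets) into an invariant conservative part and an
invariant dissipative part. -/
theorem hopf_decomposition {X : Type*} [MeasurableSpace X] (ν : Measure X) [SigmaFinite ν]
    (f : Equiv.Perm X) (hf : Measurable f) (hf' : Measurable f.symm)
    (hpres : MeasurePreserving f ν ν) :
    ∃ C D : Set X, MeasurableSet C ∧ MeasurableSet D ∧ Disjoint C D ∧ C ∪ D = Set.univ ∧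
      ν ((⇑f ⁻¹' C) ∆ C) = 0 ∧ ν ((⇑f ⁻¹' D) ∆ D) = 0 ∧
      ConservativeOn (⇑f) ν C ∧ DissipativeOn f ν D ∧
      (∀ C' D' : Set X, MeasurableSet C' → MeasurableSet D' → Disjoint C' D' →
        C' ∪ D' = Set.univ →
        ν ((⇑f ⁻¹' C') ∆ C') = 0 → ν ((⇑f ⁻¹' D') ∆ D') = 0 →
        ConservativeOn (⇑f) ν C' → DissipativeOn f ν D' →
        ν (C ∆ C') = 0 ∧ ν (D ∆ D') = 0) := by
  obtain ⟨M, hMw, hmax⟩ := exists_max_wand hf hf' hpres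
  set D : Set X := sat f M with hD
  set C : Set X := Dᶜ with hC
  have hDmeas : MeasurableSet D := measurableSet_sat hf hf' hMw.1
  have hCmeas : MeasurableSet C := hDmeas.compl
  have hfD : ⇑f ⁻¹' D = D := preimage_f_sat f M
  have hfC : ⇑f ⁻¹' C = C := by rw [hC, preimage_compl, hfD]
  have hcons : ConservativeOn (⇑f) ν C := conservativeOn_of_max hf hmax
  have e1 : ν ((⇑f ⁻¹' C) ∆ C) = 0 := by
    rw [hfC, symmDiff_self]
    simp
  have e2 : ν ((⇑f ⁻¹' D) ∆ D) = 0 := by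
    rw [hfD, symmDiff_self]
    simp
  have e3 : DissipativeOn f ν D := by
    refine ⟨M, hMw.1, hMw.2, ?_⟩
    rw [show (⋃ k : ℤ, ((f ^ k : Equiv.Perm X) : X → X) '' M) = D from rfl, symmDiff_self]
    simp
  refine ⟨C, D, hCmeas, hDmeas, disjoint_compl_left, compl_union_self D, e1, e2, hcons, e3, ?_⟩
  intro C' D' hC'm hD'm hdisj' hunion' hinvC' _ hcons' hdiss'
  obtain ⟨A', hA'm, hA'p, hA'null⟩ := hdiss'
  have hA'w : Wand f A' := ⟨hA'm, hA'p⟩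
  have hD'ae : D' =ᵐ[ν] sat f A' := measure_symmDiff_eq_zero_iff.1 hA'null
  have hinvC'ae : ⇑f ⁻¹' C' =ᵐ[ν] C' := measure_symmDiff_eq_zero_iff.1 hinvC'
  -- ν (D ∩ C') = 0
  have h1 : ν (D ∩ C') = 0 :=
    sat_inter_conservative_null hf hf' hpres hMw hC'm hcons' hinvC'ae
  -- ν (C ∩ D') = 0
  have h2 : ν (C ∩ D') = 0 := by
    have hCae : ⇑f ⁻¹' C =ᵐ[ν] C := by rw [hfC]; exact ae_eq_refl C
    have h3 : ν (sat f A' ∩ C) = 0 :=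
      sat_inter_conservative_null hf hf' hpres hA'w hCmeas hcons hCae
    have h4 : (C ∩ D' : Set X) =ᵐ[ν] (C ∩ sat f A' : Set X) :=
      ae_eq_set_inter (ae_eq_refl C) hD'ae
    rw [measure_congr h4, inter_comm]
    exact h3
  have hD'c : D' = C'ᶜ := by
    apply subset_antisymm
    · exact fun x hx hc => Set.disjoint_left.1 hdisj' hc hx
    · intro x hx
      rcases (hunion' ▸ mem_univ x : x ∈ C' ∪ D') with h | h
      · exact absurd h hx
      · exact h
  have hCC' : ν (C ∆ C') = 0 := by
    have hsub : C ∆ C' ⊆ (C ∩ D') ∪ (D ∩ C') := by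
      rintro x hx
      rcases hx with ⟨hxC, hxC'⟩ | ⟨hxC', hxC⟩
      · left
        refine ⟨hxC, ?_⟩
        rcases (hunion' ▸ mem_univ x : x ∈ C' ∪ D') with h | h
        · exact absurd h hxC'
        · exact h
      · right
        exact ⟨not_not.1 fun h => hxC h, hxC'⟩
    refine le_antisymm ?_ zero_le
    calc ν (C ∆ C') ≤ ν ((C ∩ D') ∪ (D ∩ C')) := measure_mono hsub
      _ ≤ ν (C ∩ D') + ν (D ∩ C') := measure_union_le _ _
      _ = 0 := by rw [h1, h2, add_zero]
  refine ⟨hCC', ?_⟩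
  have hDc : D = Cᶜ := (compl_compl D).symm
  rw [hDc, hD'c, compl_symmDiff_compl]
  exact hCC'
end
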